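/- arXiv:1808.09710 — 3 statements merged into one kernel-verified Lean document; each statement's English description precedes it below -/
import Mathlib

section
/- (Approximation lemma) Let μ be a Radon measure on ℝ^d, L > 0, and f ∈ C_c(ℝ^d) with supp f ⊂ B(0,L). Let g : ℝ^d × ℝ^d → ℂ satisfy: (i) |g(x,λ)| ≤ 1 for all x,λ; (ii) x ↦ g(x,λ) is smooth for each λ; (iii) for every compact K ⊂ ℝ^d there is M_K such that |∂g/∂x_j (x,λ)| ≤ M_K for all x ∈ B(0,L), λ ∈ K, 1 ≤ j ≤ d. Define F(λ) = ∫_{B(0,L)} f(x) g(x,λ) dμ(x). Then for every ε > 0 and τ > 0 there exist points v₁,…,v_N ∈ B(0,L) and constants C_{v₁},…,C_{v_N} ∈ ℂ such that |F(λ) − Σ_j C_{v_j} g(v_j,λ)| < ε for all λ ∈ B(0,τ), and |Σ_j C_{v_j} g(v_j,λ)| ≤ ∫_{B(0,L)} |f| dμ for all λ ∈ ℝ^d. -/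
open MeasureTheory Metric

lemma opnorm_aux {d : ℕ} (T : EuclideanSpace ℝ (Fin d) →L[ℝ] ℂ) {M : ℝ} (hM : 0 ≤ M)
    (h : ∀ j, ‖T (EuclideanSpace.single j 1)‖ ≤ M) : ‖T‖ ≤ d * M := by
  refine T.opNorm_le_bound (by positivity) (fun u => ?_)
  have hdec : u = ∑ j, u j • EuclideanSpace.single j (1:ℝ) := by
    have := (EuclideanSpace.basisFun (Fin d) ℝ).sum_repr u
    simp only [EuclideanSpace.basisFun_apply, EuclideanSpace.basisFun_repr] at this
    exact this.symm
  have habs : ∀ j, |u j| ≤ ‖u‖ := by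
    intro j
    have h1 := norm_inner_le_norm (𝕜 := ℝ) (EuclideanSpace.single j (1:ℝ)) u
    simpa [EuclideanSpace.inner_single_left, EuclideanSpace.norm_single] using h1
  calc ‖T u‖ = ‖∑ j, u j • T (EuclideanSpace.single j (1:ℝ))‖ := by
        conv_lhs => rw [hdec]
        rw [map_sum]
        simp
    _ ≤ ∑ j, ‖u j • T (EuclideanSpace.single j (1:ℝ))‖ := norm_sum_le _ _
    _ ≤ ∑ _j : Fin d, ‖u‖ * M := by
        refine Finset.sum_le_sum (fun j _ => ?_)
        rw [norm_smul, Real.norm_eq_abs]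
        exact mul_le_mul (habs j) (h j) (norm_nonneg _) (norm_nonneg _)
    _ = ↑d * M * ‖u‖ := by simp [Finset.sum_const]; ring

/-- Approximation lemma: `F(λ) = ∫_{B(0,L)} f(x) g(x,λ) dμ(x)` can be uniformly
approximated on compact sets by finite linear combinations of the `g(vⱼ,·)`. -/
theorem stmt8 (d : ℕ) (μ : Measure (EuclideanSpace ℝ (Fin d)))
    [IsFiniteMeasureOnCompacts μ] (L : ℝ) (hL : 0 < L)
    (f : EuclideanSpace ℝ (Fin d) → ℂ) (hfc : Continuous f)
    (hfs : HasCompactSupport f) (hsupp : tsupport f ⊆ ball (0 : EuclideanSpace ℝ (Fin d)) L)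
    (g : EuclideanSpace ℝ (Fin d) → EuclideanSpace ℝ (Fin d) → ℂ)
    (hg1 : ∀ x lam, ‖g x lam‖ ≤ 1)
    (hg2 : ∀ lam, ContDiff ℝ (⊤ : ℕ∞) (fun x => g x lam))
    (hg3 : ∀ K : Set (EuclideanSpace ℝ (Fin d)), IsCompact K → ∃ M : ℝ,
      ∀ x ∈ ball (0 : EuclideanSpace ℝ (Fin d)) L, ∀ lam ∈ K, ∀ j : Fin d,
        ‖fderiv ℝ (fun y => g y lam) x (EuclideanSpace.single j 1)‖ ≤ M)
    (F : EuclideanSpace ℝ (Fin d) → ℂ)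
    (hF : ∀ lam, F lam = ∫ x in ball (0 : EuclideanSpace ℝ (Fin d)) L, f x * g x lam ∂μ)
    (ε τ : ℝ) (hε : 0 < ε) (hτ : 0 < τ) :
    ∃ (N : ℕ) (v : Fin N → EuclideanSpace ℝ (Fin d)) (c : Fin N → ℂ),
      (∀ i, v i ∈ ball (0 : EuclideanSpace ℝ (Fin d)) L) ∧
      (∀ lam ∈ ball (0 : EuclideanSpace ℝ (Fin d)) τ,
        ‖F lam - ∑ i, c i * g (v i) lam‖ < ε) ∧
      (∀ lam, ‖∑ i, c i * g (v i) lam‖ ≤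
        ∫ x in ball (0 : EuclideanSpace ℝ (Fin d)) L, ‖f x‖ ∂μ) := by
  classical
  -- derivative bound
  obtain ⟨M₀, hM₀⟩ := hg3 (closedBall 0 τ) (isCompact_closedBall _ _)
  set M : ℝ := max M₀ 0 with hMdef
  have hM : 0 ≤ M := le_max_right _ _
  have hLip : ∀ lam ∈ closedBall (0 : EuclideanSpace ℝ (Fin d)) τ, ∀ x ∈ ball (0 : EuclideanSpace ℝ (Fin d)) L, ∀ y ∈ ball (0 : EuclideanSpace ℝ (Fin d)) L,
      ‖g x lam - g y lam‖ ≤ (d * M) * ‖x - y‖ := by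
    intro lam hlam x hx y hy
    have hdiff : ∀ z ∈ ball (0 : EuclideanSpace ℝ (Fin d)) L, DifferentiableAt ℝ (fun w => g w lam) z :=
      fun z _ => ((hg2 lam).differentiable (by simp)).differentiableAt
    have hbound : ∀ z ∈ ball (0 : EuclideanSpace ℝ (Fin d)) L, ‖fderiv ℝ (fun w => g w lam) z‖ ≤ d * M := by
      intro z hz
      exact opnorm_aux _ hM (fun j => le_trans (hM₀ z hz lam hlam j) (le_max_left _ _))
    exact (convex_ball (0 : EuclideanSpace ℝ (Fin d)) L).norm_image_sub_le_of_norm_fderiv_le hdiff hbound hy hx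
  -- constants
  set I : ℝ := ∫ x in ball (0 : EuclideanSpace ℝ (Fin d)) L, ‖f x‖ ∂μ with hIdef
  have hI0 : 0 ≤ I := integral_nonneg fun x => norm_nonneg _
  set C : ℝ := d * M + 1 with hCdef
  have hC : 0 < C := by positivity
  set δ : ℝ := ε / (C * (I + 1)) with hδdef
  have hδ : 0 < δ := by positivity
  -- integrability
  have hfint : Integrable f μ := hfc.integrable_of_hasCompactSupport hfs
  have hfg : ∀ lam : EuclideanSpace ℝ (Fin d), Integrable (fun x => f x * g x lam) μ := fun lam =>
    (hfc.mul ((hg2 lam).continuous)).integrable_of_hasCompactSupport hfs.mul_right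
  -- net
  have htb : TotallyBounded (ball (0 : EuclideanSpace ℝ (Fin d)) L) :=
    (isCompact_closedBall (0 : EuclideanSpace ℝ (Fin d)) L).totallyBounded.subset ball_subset_closedBall
  obtain ⟨t, hts, htf, htcov⟩ := finite_approx_of_totallyBounded htb δ hδ
  obtain ⟨N, v, hv⟩ := htf.fin_embedding
  -- partition
  set A : Fin N → Set (EuclideanSpace ℝ (Fin d)) := fun i =>
    (ball (0 : EuclideanSpace ℝ (Fin d)) L ∩ ball (v i) δ) ∩ {x | ∀ j, j < i → x ∉ ball (v j) δ} with hAdef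
  have hAmeas : ∀ i, MeasurableSet (A i) := by
    intro i
    refine (measurableSet_ball.inter measurableSet_ball).inter ?_
    have : {x : EuclideanSpace ℝ (Fin d) | ∀ j, j < i → x ∉ ball (v j) δ} =
        ⋂ j, ⋂ (_ : j < i), (ball (v j) δ)ᶜ := by ext x; simp
    rw [this]
    exact MeasurableSet.iInter fun j => MeasurableSet.iInter fun _ => measurableSet_ball.compl
  have hAdisj : Pairwise (Function.onFun Disjoint A) := by
    intro i j hij
    rcases hij.lt_or_gt with h | h
    · refine Set.disjoint_left.mpr (fun x hxi hxj => ?_)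
      exact hxj.2 i h hxi.1.2
    · refine Set.disjoint_left.mpr (fun x hxi hxj => ?_)
      exact hxi.2 j h hxj.1.2
  have hAsub : ∀ i, A i ⊆ ball (0 : EuclideanSpace ℝ (Fin d)) L := fun i x hx => hx.1.1
  have hAunion : (⋃ i, A i) = ball (0 : EuclideanSpace ℝ (Fin d)) L := by
    apply Set.Subset.antisymm
    · exact Set.iUnion_subset hAsub
    · intro x hx
      have hxcov := htcov hx
      simp only [Set.mem_iUnion] at hxcov
      obtain ⟨y, hyt, hxy⟩ := hxcov
      obtain ⟨i, hi⟩ : ∃ i, v i = y := by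
        have : y ∈ Set.range v := hv ▸ hyt
        exact this
      have hSne : (Finset.univ.filter (fun i => x ∈ ball (v i) δ)).Nonempty :=
        ⟨i, by simpa [hi] using hxy⟩
      set i₀ := (Finset.univ.filter (fun i => x ∈ ball (v i) δ)).min' hSne with hi₀
      have hmem : x ∈ ball (v i₀) δ := by
        have := Finset.min'_mem _ hSne
        exact (Finset.mem_filter.mp this).2
      refine Set.mem_iUnion.mpr ⟨i₀, ⟨⟨hx, hmem⟩, ?_⟩⟩
      intro j hj hxj
      have : i₀ ≤ j := Finset.min'_le _ _ (by simpa using hxj)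
      exact absurd hj (not_lt.mpr this)
  have hvball : ∀ i, v i ∈ ball (0 : EuclideanSpace ℝ (Fin d)) L := fun i => hts (hv ▸ Set.mem_range_self i)
  -- coefficients
  set c : Fin N → ℂ := fun i => ∫ x in A i, f x ∂μ with hcdef
  refine ⟨N, v, c, hvball, ?_, ?_⟩
  · -- main estimate
    intro lam hlam
    have hlam' : lam ∈ closedBall (0 : EuclideanSpace ℝ (Fin d)) τ := ball_subset_closedBall hlam
    have hsplit : F lam = ∑ i, ∫ x in A i, f x * g x lam ∂μ := by
      rw [hF, ← hAunion]
      exact integral_iUnion_fintype hAmeas hAdisj (fun i => (hfg lam).integrableOn)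
    have hterm : ∀ i, c i * g (v i) lam = ∫ x in A i, f x * g (v i) lam ∂μ := by
      intro i
      rw [hcdef]
      exact (integral_mul_const _ _).symm
    have hdiff_eq : F lam - ∑ i, c i * g (v i) lam =
        ∑ i, ∫ x in A i, (f x * g x lam - f x * g (v i) lam) ∂μ := by
      rw [hsplit]
      rw [← Finset.sum_sub_distrib]
      congr 1
      funext i
      rw [hterm i, ← integral_sub ((hfg lam).integrableOn)
        ((hfint.mul_const _).integrableOn)]
    have hCδ : C * δ = ε / (I + 1) := by
      rw [hδdef]
      field_simp
    have hbound : ∀ i, ‖∫ x in A i, (f x * g x lam - f x * g (v i) lam) ∂μ‖ ≤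
        (∫ x in A i, ‖f x‖ ∂μ) * (C * δ) := by
      intro i
      calc ‖∫ x in A i, (f x * g x lam - f x * g (v i) lam) ∂μ‖
          ≤ ∫ x in A i, ‖f x * g x lam - f x * g (v i) lam‖ ∂μ :=
            norm_integral_le_integral_norm _
        _ ≤ ∫ x in A i, ‖f x‖ * (C * δ) ∂μ := by
            apply setIntegral_mono_on
            · exact (((hfg lam).integrableOn.sub
                ((hfint.mul_const _).integrableOn)).norm)
            · exact (hfint.norm.mul_const _).integrableOn
            · exact hAmeas i
            · intro x hx
              rw [← mul_sub, norm_mul]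
              have h1 : ‖g x lam - g (v i) lam‖ ≤ C * δ := by
                have h2 := hLip lam hlam' x (hAsub i hx) (v i) (hvball i)
                have h3 : ‖x - v i‖ ≤ δ := by
                  have : dist x (v i) < δ := hx.1.2
                  rw [dist_eq_norm] at this
                  exact this.le
                calc ‖g x lam - g (v i) lam‖ ≤ (d * M) * ‖x - v i‖ := h2
                  _ ≤ (d * M) * δ := by
                      exact mul_le_mul_of_nonneg_left h3 (by positivity)
                  _ ≤ C * δ := by
                      apply mul_le_mul_of_nonneg_right _ hδ.le
                      rw [hCdef]; linarith
              exact mul_le_mul_of_nonneg_left h1 (norm_nonneg _)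
        _ = (∫ x in A i, ‖f x‖ ∂μ) * (C * δ) := integral_mul_const _ _
    have hIsplit : I = ∑ i, ∫ x in A i, ‖f x‖ ∂μ := by
      rw [hIdef, ← hAunion]
      exact integral_iUnion_fintype hAmeas hAdisj (fun i => hfint.norm.integrableOn)
    calc ‖F lam - ∑ i, c i * g (v i) lam‖
        ≤ ∑ i, ‖∫ x in A i, (f x * g x lam - f x * g (v i) lam) ∂μ‖ := by
          rw [hdiff_eq]; exact norm_sum_le _ _
      _ ≤ ∑ i, (∫ x in A i, ‖f x‖ ∂μ) * (C * δ) := Finset.sum_le_sum fun i _ => hbound i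
      _ = I * (C * δ) := by rw [← Finset.sum_mul, ← hIsplit]
      _ < ε := by
          rw [hCδ]
          rw [mul_div_assoc']
          rw [div_lt_iff₀ (by positivity)]
          nlinarith
  · -- absolute bound
    intro lam
    have hIsplit : I = ∑ i, ∫ x in A i, ‖f x‖ ∂μ := by
      rw [hIdef, ← hAunion]
      exact integral_iUnion_fintype hAmeas hAdisj (fun i => hfint.norm.integrableOn)
    calc ‖∑ i, c i * g (v i) lam‖ ≤ ∑ i, ‖c i * g (v i) lam‖ := norm_sum_le _ _
      _ ≤ ∑ i, ∫ x in A i, ‖f x‖ ∂μ := by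
          refine Finset.sum_le_sum fun i _ => ?_
          rw [norm_mul]
          calc ‖c i‖ * ‖g (v i) lam‖ ≤ ‖c i‖ * 1 :=
                mul_le_mul_of_nonneg_left (hg1 _ _) (norm_nonneg _)
            _ = ‖c i‖ := mul_one _
            _ ≤ ∫ x in A i, ‖f x‖ ∂μ := norm_integral_le_integral_norm _
      _ = I := hIsplit.symm
end

section
/- Let f : ℝ^d → ℂ be bounded, ψ : [0,∞) → [0,∞) increasing with ψ(r) → ∞, and let u : ℝ^d → ℂ be bounded and continuous with u(0) = 1. Then for every ε > 0 there exists h > 0 (which may be taken smaller than any prescribed positive bound) such that sup_{λ∈ℝ^d} |f(λ) − f(λ)u(hλ)| e^{-ψ(‖λ‖)} < ε. -/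
/-!
Write `f λ - f λ u(hλ) = (1 - u(hλ)) f λ` and absorb `f` into the weight `w λ = ‖f λ‖ e^{-ψ(‖λ‖)}`,
which is bounded and tends to `0` at infinity. For `‖λ‖ ≥ M` the product `‖1 - u(hλ)‖ w λ` is
small because `w λ` is and `1 - u` is bounded; for `‖λ‖ < M` it is small once `|h| M` is within the
modulus of continuity of `u` at `0`. Hence `‖1 - u(h·)‖ w → 0` uniformly as `h → 0`.
-/

open Filter Bornology Topology

section

variable {E F : Type*} [NormedAddCommGroup E] [NormedSpace ℝ E] [NormedAddCommGroup F]

theorem tendstoUniformly_norm_comp_smul_mul {g : E → F} {w : E → ℝ} {C W : ℝ}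
    (hgC : ∀ x, ‖g x‖ ≤ C) (hg : Tendsto g (𝓝 0) (𝓝 0))
    (hw_nonneg : ∀ x, 0 ≤ w x) (hwW : ∀ x, w x ≤ W) (hw : Tendsto w (cobounded E) (𝓝 0)) :
    TendstoUniformly (fun (h : ℝ) x => ‖g (h • x)‖ * w x) 0 (𝓝 0) := by
  rw [Metric.tendstoUniformly_iff]
  intro ε hε
  have hC : 0 ≤ C := (norm_nonneg _).trans (hgC 0)
  have hW : 0 ≤ W := (hw_nonneg 0).trans (hwW 0)
  obtain ⟨M, -, hM⟩ := hasBasis_cobounded_norm.eventually_iff.mp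
    (hw.eventually (gt_mem_nhds (show 0 < ε / (C + 1) by positivity)))
  obtain ⟨δ, hδ, hgδ⟩ := Metric.tendsto_nhds_nhds.mp hg (ε / (W + 1)) (by positivity)
  have hM' : 0 < |M| + 1 := by positivity
  filter_upwards [Metric.ball_mem_nhds 0 (div_pos hδ hM')] with h hh x
  rw [Pi.zero_apply, dist_zero_left, 
    Real.norm_of_nonneg (mul_nonneg (norm_nonneg _) (hw_nonneg x))]
  by_cases hx : M ≤ ‖x‖
  · have hwx := (lt_div_iff₀' (by positivity)).mp (hM hx)
    nlinarith [hgC (h • x), hw_nonneg x]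
  · have hhx : ‖h • x‖ < δ := by
      rw [mem_ball_zero_iff, Real.norm_eq_abs, lt_div_iff₀ hM'] at hh
      rw [norm_smul, Real.norm_eq_abs]
      nlinarith [abs_nonneg h, le_abs_self M]
    have hgx := (lt_div_iff₀ (by positivity)).mp
      (dist_zero_right (g _) ▸ hgδ (by simpa using hhx))
    nlinarith [hwW x, hw_nonneg x, norm_nonneg (g (h • x))]

end

theorem stmt13_general (d : ℕ) (ψ : ℝ → ℝ) (hψ0 : ∀ r, 0 ≤ r → 0 ≤ ψ r)
    (htop : Filter.Tendsto ψ Filter.atTop Filter.atTop)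
    (f : EuclideanSpace ℝ (Fin d) → ℂ) (hfb : ∃ B : ℝ, ∀ x, ‖f x‖ ≤ B)
    (u : EuclideanSpace ℝ (Fin d) → ℂ) (huc : Continuous u)
    (hub : ∃ B : ℝ, ∀ x, ‖u x‖ ≤ B) (hu0 : u 0 = 1)
    (ε : ℝ) (hε : 0 < ε) (h₀ : ℝ) (hh₀ : 0 < h₀) :
    ∃ h : ℝ, 0 < h ∧ h < h₀ ∧
      ∀ lam : EuclideanSpace ℝ (Fin d),
        ‖f lam - f lam * u (h • lam)‖ * Real.exp (-ψ ‖lam‖) < ε := by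
  obtain ⟨B, hB⟩ := hfb
  obtain ⟨Bu, hBu⟩ := hub
  have hexp_le_one (x : EuclideanSpace ℝ (Fin d)) : Real.exp (-ψ ‖x‖) ≤ 1 :=
    Real.exp_le_one_iff.mpr (neg_nonpos.mpr (hψ0 _ (norm_nonneg x)))
  have hw : Tendsto (fun x => ‖f x‖ * Real.exp (-ψ ‖x‖)) (cobounded _) (𝓝 0) :=
    isBoundedUnder_le_mul_tendsto_zero (isBoundedUnder_of ⟨B, fun x => by simpa using hB x⟩)
      (Real.tendsto_exp_neg_atTop_nhds_zero.comp (htop.comp tendsto_norm_cobounded_atTop))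
  have hg : Tendsto (fun x => 1 - u x) (𝓝 0) (𝓝 0) := by
    simpa [hu0] using (tendsto_const_nhds (x := (1 : ℂ))).sub (huc.tendsto 0)
  have hunif := tendstoUniformly_norm_comp_smul_mul (C := 1 + Bu) (W := B)
    (fun x => (norm_sub_le _ _).trans (by simpa using hBu x)) hg (fun x => by positivity)
    (fun x => (mul_le_of_le_one_right (norm_nonneg _) (hexp_le_one x)).trans (hB x)) hw
  obtain ⟨h, hsmall, hpos, hlt⟩ := ((Metric.tendstoUniformly_iff.mp hunif ε hε).filter_mono
    nhdsWithin_le_nhds |>.and (Ioo_mem_nhdsGT hh₀)).exists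
  refine ⟨h, hpos, hlt, fun lam => ?_⟩
  calc ‖f lam - f lam * u (h • lam)‖ * Real.exp (-ψ ‖lam‖)
      = ‖1 - u (h • lam)‖ * (‖f lam‖ * Real.exp (-ψ ‖lam‖)) := by
        rw [← mul_one_sub, norm_mul]; ring
    _ < ε := by simpa [abs_of_nonneg] using hsmall lam

/-- Multiplying by a dilated bump Fourier transform `u(hλ)` with `u(0)=1` changes
a bounded `f` by an arbitrarily small amount in the `‖·‖_ψ` norm, with `h` as
small as prescribed. -/
theorem stmt13 (d : ℕ) (ψ : ℝ → ℝ) (hψ0 : ∀ r, 0 ≤ r → 0 ≤ ψ r)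
    (hmono : MonotoneOn ψ (Set.Ici 0))
    (htop : Filter.Tendsto ψ Filter.atTop Filter.atTop)
    (f : EuclideanSpace ℝ (Fin d) → ℂ) (hfb : ∃ B : ℝ, ∀ x, ‖f x‖ ≤ B)
    (u : EuclideanSpace ℝ (Fin d) → ℂ) (huc : Continuous u)
    (hub : ∃ B : ℝ, ∀ x, ‖u x‖ ≤ B) (hu0 : u 0 = 1)
    (ε : ℝ) (hε : 0 < ε) (h₀ : ℝ) (hh₀ : 0 < h₀) :
    ∃ h : ℝ, 0 < h ∧ h < h₀ ∧
      ∀ lam : EuclideanSpace ℝ (Fin d),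
        ‖f lam - f lam * u (h • lam)‖ * Real.exp (-ψ ‖lam‖) < ε :=
  stmt13_general d ψ hψ0 htop f hfb u huc hub hu0 ε hε h₀ hh₀
end

section
/- If f ∈ L¹(ℝ^d) and for some t > 0 the convolution f * p_t with the Gaussian heat kernel p_t(x) = (4πt)^{-d/2} e^{-‖x‖²/4t} vanishes on a nonempty open subset of ℝ^d, then f = 0 almost everywhere. -/
set_option linter.unusedSectionVars false
open MeasureTheory Filter
open scoped ContDiff FourierTransform RealInnerProductSpace Topology ComplexConjugate

section Aux

variable {V : Type*} [NormedAddCommGroup V] [InnerProductSpace ℝ V] [FiniteDimensional ℝ V]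
  [MeasurableSpace V] [BorelSpace V]

private lemma gauss_sup {a : ℝ} (K : ℝ) {s : ℝ} (ha : 0 < a) (_hs : 0 ≤ s) :
    -a * s ^ 2 + K * s ≤ K ^ 2 / (4 * a) := by
  rw [le_div_iff₀ (by positivity)]
  nlinarith [sq_nonneg (2 * a * s - K)]

/-- A smooth compactly supported real function gives a (complex-valued) Schwartz map. -/
private lemma exists_schwartz (φ : V → ℝ) (h1 : ContDiff ℝ ∞ φ) (h2 : HasCompactSupport φ) :
    ∃ Φ : SchwartzMap V ℂ, ∀ x, Φ x = (φ x : ℂ) := by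
  classical
  set Φc : V → ℂ := fun x ↦ (φ x : ℂ) with hΦc
  have hsmooth : ContDiff ℝ ∞ Φc := Complex.ofRealCLM.contDiff.comp h1
  have hcs : HasCompactSupport Φc := h2.comp_left (g := fun r : ℝ ↦ (r : ℂ)) (by simp)
  have hdecay : ∀ k n : ℕ, ∃ C : ℝ, ∀ x, ‖x‖ ^ k * ‖iteratedFDeriv ℝ n Φc x‖ ≤ C := by
    intro k n
    have hcont : Continuous fun x ↦ ‖x‖ ^ k * ‖iteratedFDeriv ℝ n Φc x‖ := by
      exact (continuous_norm.pow k).mul ((hsmooth.continuous_iteratedFDeriv (mod_cast le_top)).norm)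
    have hcs' : HasCompactSupport fun x ↦ ‖x‖ ^ k * ‖iteratedFDeriv ℝ n Φc x‖ := by
      apply HasCompactSupport.mul_left
      exact (hcs.iteratedFDeriv n).comp_left (g := fun y ↦ ‖y‖) (by simp)
    obtain ⟨C, hC⟩ := hcont.bounded_above_of_compact_support hcs'
    exact ⟨C, fun x ↦ (le_abs_self _).trans ((Real.norm_eq_abs _ ▸ hC x))⟩
  exact ⟨⟨Φc, hsmooth, hdecay⟩, fun x ↦ rfl⟩

end Aux

section Aux2

variable {V : Type*} [NormedAddCommGroup V] [InnerProductSpace ℝ V] [FiniteDimensional ℝ V]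
  [MeasurableSpace V] [BorelSpace V]

private lemma ae_zero_of_fourier_zero (f : V → ℂ) (hf : Integrable f)
    (h : ∀ ξ, 𝓕 f ξ = 0) : f =ᵐ[volume] 0 := by
  apply ae_eq_zero_of_integral_contDiff_smul_eq_zero (hf.locallyIntegrable)
  intro g hg1 hg2
  obtain ⟨Φ, hΦ⟩ := exists_schwartz g hg1 hg2
  set ψ := (SchwartzMap.fourierTransformCLE ℂ (SchwartzMap V ℂ)).symm Φ with hψ
  have hFψ : 𝓕 ⇑ψ = ⇑Φ := by
    have := (SchwartzMap.fourierTransformCLE ℂ (SchwartzMap V ℂ)).apply_symm_apply Φ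
    calc 𝓕 ⇑ψ = ⇑(SchwartzMap.fourierTransformCLE ℂ (SchwartzMap V ℂ) ψ) := by
          rfl
      _ = ⇑Φ := by rw [this]
  have hflip : (innerₗ V).flip = innerₗ V := by
    apply LinearMap.ext; intro x; apply LinearMap.ext; intro y
    show (inner ℝ y x : ℝ) = inner ℝ x y
    exact real_inner_comm x y
  have key := VectorFourier.integral_fourierIntegral_smul_eq_flip
    (L := innerₗ V) (μ := (volume : Measure V)) (ν := (volume : Measure V))
    Real.continuous_fourierChar continuous_inner hf ψ.integrable
  rw [hflip] at key
  have hL : ∀ ξ, VectorFourier.fourierIntegral Real.fourierChar volume (innerₗ V) f ξ = 0 := h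
  have hR : ∀ x, VectorFourier.fourierIntegral Real.fourierChar volume (innerₗ V) (⇑ψ) x
      = Φ x := by
    intro x
    have : VectorFourier.fourierIntegral Real.fourierChar volume (innerₗ V) (⇑ψ) x = 𝓕 ⇑ψ x := rfl
    rw [this, hFψ]
  simp only [hL, zero_smul, integral_zero] at key
  have : ∫ x, f x • Φ x ∂(volume : Measure V) = 0 := by
    rw [show (∫ x, f x • Φ x ∂(volume : Measure V))
        = ∫ x, f x • VectorFourier.fourierIntegral Real.fourierChar volume (innerₗ V) (⇑ψ) x
          ∂(volume : Measure V) by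
      congr 1; funext x; rw [hR]]
    exact key.symm
  have hfun : (fun x ↦ g x • f x) = fun x ↦ f x • Φ x := by
    funext x; rw [hΦ x]; simp [Complex.real_smul, smul_eq_mul]; ring
  rw [hfun]
  exact this

end Aux2
section Aux4

variable {V : Type*} [NormedAddCommGroup V] [InnerProductSpace ℝ V] [FiniteDimensional ℝ V]
  [MeasurableSpace V] [BorelSpace V]

private lemma hasDerivAt_quad (A B C : ℂ) (z : ℂ) :
    HasDerivAt (fun z : ℂ ↦ A + B * z + C * z ^ 2) (B + C * (2 * z)) z := by
  have hb : HasDerivAt (fun z : ℂ ↦ B * z) B z := by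
    simpa using (hasDerivAt_id z).const_mul B
  have hc : HasDerivAt (fun z : ℂ ↦ C * z ^ 2) (C * (2 * z)) z := by
    have := (hasDerivAt_pow 2 z).const_mul C
    exact this.congr_deriv (by simp)
  exact (((hasDerivAt_const z A).add hb).add hc).congr_deriv (by simp)

private lemma entire_conv (f : V → ℂ) (hf : Integrable f) (a : ℝ) (ha : 0 < a) (x0 w : V) :
    Differentiable ℂ (fun z : ℂ ↦ ∫ y, f y * Complex.exp (-(a : ℂ) *
      (((‖x0 - y‖ ^ 2 : ℝ) : ℂ) + ((2 * ⟪x0 - y, w⟫ : ℝ) : ℂ) * z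
        + ((‖w‖ ^ 2 : ℝ) : ℂ) * z ^ 2))) := by
  set Q : ℂ → V → ℂ := fun z y ↦ f y * Complex.exp (-(a : ℂ) *
      (((‖x0 - y‖ ^ 2 : ℝ) : ℂ) + ((2 * ⟪x0 - y, w⟫ : ℝ) : ℂ) * z
        + ((‖w‖ ^ 2 : ℝ) : ℂ) * z ^ 2)) with hQ
  set Q' : ℂ → V → ℂ := fun z y ↦ Q z y * (-(a : ℂ) *
      (((2 * ⟪x0 - y, w⟫ : ℝ) : ℂ) + ((‖w‖ ^ 2 : ℝ) : ℂ) * (2 * z))) with hQ'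
  intro z0
  set R : ℝ := ‖z0‖ + 1 with hRdef
  have hR0 : (0 : ℝ) ≤ R := by positivity
  set W : ℝ := ‖w‖ with hWdef
  have hW0 : (0 : ℝ) ≤ W := norm_nonneg _
  set K : ℝ := 2 * a * R * W with hKdef
  set c0 : ℝ := a * R ^ 2 * W ^ 2 with hc0def
  -- continuity of the integrand in y
  have hc1 : Continuous fun y : V ↦ ((‖x0 - y‖ ^ 2 : ℝ) : ℂ) :=
    Complex.continuous_ofReal.comp (((continuous_const.sub continuous_id).norm).pow 2)
  have hc2 : Continuous fun y : V ↦ ((2 * ⟪x0 - y, w⟫ : ℝ) : ℂ) :=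
    Complex.continuous_ofReal.comp
      (continuous_const.mul ((continuous_const.sub continuous_id).inner continuous_const))
  have measQ : ∀ z : ℂ, AEStronglyMeasurable (Q z) volume := by
    intro z
    apply hf.1.mul
    apply Continuous.aestronglyMeasurable
    exact Complex.continuous_exp.comp
      (continuous_const.mul ((hc1.add (hc2.mul continuous_const)).add continuous_const))
  have measQ' : ∀ z : ℂ, AEStronglyMeasurable (Q' z) volume := by
    intro z
    apply (measQ z).mul
    apply Continuous.aestronglyMeasurable
    exact continuous_const.mul (hc2.add continuous_const)
  -- the basic norm bound for Q
  have hnormQ : ∀ z : ℂ, ‖z‖ ≤ R → ∀ y : V,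
      ‖Q z y‖ = ‖f y‖ * Real.exp ((-(a : ℂ) *
        (((‖x0 - y‖ ^ 2 : ℝ) : ℂ) + ((2 * ⟪x0 - y, w⟫ : ℝ) : ℂ) * z
          + ((‖w‖ ^ 2 : ℝ) : ℂ) * z ^ 2)).re) := by
    intro z _ y
    rw [hQ]
    simp only [norm_mul, Complex.norm_exp, hWdef]
  have hre_le : ∀ z : ℂ, ‖z‖ ≤ R → ∀ y : V,
      (-(a : ℂ) * (((‖x0 - y‖ ^ 2 : ℝ) : ℂ) + ((2 * ⟪x0 - y, w⟫ : ℝ) : ℂ) * z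
          + ((‖w‖ ^ 2 : ℝ) : ℂ) * z ^ 2)).re
        ≤ -a * ‖x0 - y‖ ^ 2 + K * ‖x0 - y‖ + c0 := by
    intro z hz y
    set s : ℝ := ‖x0 - y‖ with hsdef
    have hs : (0 : ℝ) ≤ s := norm_nonneg _
    set b2 : ℝ := 2 * ⟪x0 - y, w⟫ with hb2def
    have hre : (-(a : ℂ) * (((s ^ 2 : ℝ) : ℂ) + ((b2 : ℝ) : ℂ) * z
          + ((W ^ 2 : ℝ) : ℂ) * z ^ 2)).re
        = -a * (s ^ 2 + b2 * z.re + W ^ 2 * (z ^ 2).re) := by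
      rw [show (-(a : ℂ)) = ((-a : ℝ) : ℂ) by push_cast; ring, Complex.re_ofReal_mul]
      simp only [Complex.add_re, Complex.re_ofReal_mul, Complex.ofReal_re]
      try ring
    rw [hre]
    have hzre : |z.re| ≤ R := by
      calc |z.re| ≤ ‖z‖ := Complex.abs_re_le_norm z
        _ = ‖z‖ := rfl
        _ ≤ R := hz
    have hz2re : |(z ^ 2).re| ≤ R ^ 2 := by
      calc |(z ^ 2).re| ≤ ‖z ^ 2‖ := Complex.abs_re_le_norm _
        _ = ‖z‖ ^ 2 := by rw [norm_pow]
        _ ≤ R ^ 2 := by gcongr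
    have hb2 : |b2| ≤ 2 * s * W := by
      rw [hb2def, abs_mul]
      have := abs_real_inner_le_norm (x0 - y) w
      calc |(2 : ℝ)| * |⟪x0 - y, w⟫| = 2 * |⟪x0 - y, w⟫| := by rw [abs_two]
        _ ≤ 2 * (s * W) := by gcongr
        _ = 2 * s * W := by ring
    have e1 : -(b2 * z.re) ≤ 2 * s * W * R := by
      calc -(b2 * z.re) ≤ |b2 * z.re| := neg_le_abs _
        _ = |b2| * |z.re| := abs_mul _ _
        _ ≤ 2 * s * W * R := by
            apply mul_le_mul hb2 hzre (abs_nonneg _) (by positivity)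
    have e2 : -(W ^ 2 * (z ^ 2).re) ≤ W ^ 2 * R ^ 2 := by
      calc -(W ^ 2 * (z ^ 2).re) = W ^ 2 * (-(z ^ 2).re) := by ring
        _ ≤ W ^ 2 * R ^ 2 := by
            apply mul_le_mul_of_nonneg_left _ (by positivity)
            exact (neg_le_abs _).trans hz2re
    have e1' := mul_le_mul_of_nonneg_left e1 ha.le
    have e2' := mul_le_mul_of_nonneg_left e2 ha.le
    rw [hKdef, hc0def]
    nlinarith [e1', e2']
  have hQle : ∀ z : ℂ, ‖z‖ ≤ R → ∀ y : V,
      ‖Q z y‖ ≤ ‖f y‖ * Real.exp (-a * ‖x0 - y‖ ^ 2 + K * ‖x0 - y‖ + c0) := by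
    intro z hz y
    rw [hnormQ z hz y]
    exact mul_le_mul_of_nonneg_left (Real.exp_le_exp.2 (hre_le z hz y)) (norm_nonneg _)
  -- integrability of Q z for ‖z‖ ≤ R
  have hQint : ∀ z : ℂ, ‖z‖ ≤ R → Integrable (Q z) volume := by
    intro z hz
    apply Integrable.mono' (hf.norm.const_mul (Real.exp (K ^ 2 / (4 * a) + c0))) (measQ z)
    apply Filter.Eventually.of_forall
    intro y
    calc ‖Q z y‖ ≤ ‖f y‖ * Real.exp (-a * ‖x0 - y‖ ^ 2 + K * ‖x0 - y‖ + c0) := hQle z hz y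
      _ ≤ ‖f y‖ * Real.exp (K ^ 2 / (4 * a) + c0) := by
          apply mul_le_mul_of_nonneg_left _ (norm_nonneg _)
          apply Real.exp_le_exp.2
          have := gauss_sup K ha (norm_nonneg (x0 - y))
          linarith
      _ = Real.exp (K ^ 2 / (4 * a) + c0) * ‖f y‖ := by ring
  -- bound for Q' on the ball of radius 1 around z0
  set CC : ℝ := (2 * a * W + 2 * a * W ^ 2 * R) * Real.exp ((K + 1) ^ 2 / (4 * a) + c0)
    with hCCdef
  have hQ'le : ∀ y : V, ∀ z ∈ Metric.ball z0 1, ‖Q' z y‖ ≤ CC * ‖f y‖ := by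
    intro y z hzball
    have hz : ‖z‖ ≤ R := by
      have h1 : dist z z0 < 1 := Metric.mem_ball.1 hzball
      calc ‖z‖ = ‖z0 + (z - z0)‖ := by rw [show z0 + (z - z0) = z from by ring]
        _ ≤ ‖z0‖ + ‖z - z0‖ := norm_add_le _ _
        _ ≤ ‖z0‖ + 1 := by
            have : ‖z - z0‖ = dist z z0 := (dist_eq_norm z z0).symm
            linarith
    set s : ℝ := ‖x0 - y‖ with hsdef
    have hs : (0 : ℝ) ≤ s := norm_nonneg _
    set b2 : ℝ := 2 * ⟪x0 - y, w⟫ with hb2def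
    have hb2 : |b2| ≤ 2 * s * W := by
      rw [hb2def, abs_mul]
      have := abs_real_inner_le_norm (x0 - y) w
      calc |(2 : ℝ)| * |⟪x0 - y, w⟫| = 2 * |⟪x0 - y, w⟫| := by rw [abs_two]
        _ ≤ 2 * (s * W) := by gcongr
        _ = 2 * s * W := by ring
    have hfactor : ‖(-(a : ℂ) * (((b2 : ℝ) : ℂ) + ((W ^ 2 : ℝ) : ℂ) * (2 * z)))‖
        ≤ a * (2 * s * W + W ^ 2 * (2 * R)) := by
      rw [norm_mul]
      have h1 : ‖(-(a : ℂ))‖ = a := by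
        rw [norm_neg, Complex.norm_real, Real.norm_eq_abs, abs_of_pos ha]
      rw [h1]
      apply mul_le_mul_of_nonneg_left _ ha.le
      calc ‖((b2 : ℝ) : ℂ) + ((W ^ 2 : ℝ) : ℂ) * (2 * z)‖
          ≤ ‖((b2 : ℝ) : ℂ)‖ + ‖((W ^ 2 : ℝ) : ℂ) * (2 * z)‖ := norm_add_le _ _
        _ ≤ 2 * s * W + W ^ 2 * (2 * R) := by
            apply add_le_add
            · rw [Complex.norm_real, Real.norm_eq_abs]; exact hb2
            · rw [norm_mul, Complex.norm_real, Real.norm_eq_abs, abs_of_nonneg (by positivity),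
                norm_mul]
              have : ‖(2 : ℂ)‖ = 2 := by norm_num
              rw [this]
              apply mul_le_mul_of_nonneg_left _ (by positivity)
              apply mul_le_mul_of_nonneg_left hz (by norm_num)
    have hQ'eq : ‖Q' z y‖ = ‖Q z y‖ *
        ‖(-(a : ℂ) * (((b2 : ℝ) : ℂ) + ((W ^ 2 : ℝ) : ℂ) * (2 * z)))‖ := by
      rw [hQ']; rw [norm_mul]
    rw [hQ'eq]
    calc ‖Q z y‖ * ‖(-(a : ℂ) * (((b2 : ℝ) : ℂ) + ((W ^ 2 : ℝ) : ℂ) * (2 * z)))‖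
        ≤ (‖f y‖ * Real.exp (-a * s ^ 2 + K * s + c0)) * (a * (2 * s * W + W ^ 2 * (2 * R))) := by
          apply mul_le_mul (hQle z hz y) hfactor (norm_nonneg _) (by positivity)
      _ ≤ CC * ‖f y‖ := by
          rw [hCCdef]
          have step1 : a * (2 * s * W + W ^ 2 * (2 * R))
              ≤ (2 * a * W + 2 * a * W ^ 2 * R) * (s + 1) := by
            have t1 : (0:ℝ) ≤ a * W := mul_nonneg ha.le hW0
            have t2 : (0:ℝ) ≤ a * W ^ 2 * R * s := by positivity
            nlinarith [t1, t2]
          have step2 : Real.exp (-a * s ^ 2 + K * s + c0) * (s + 1)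
              ≤ Real.exp ((K + 1) ^ 2 / (4 * a) + c0) := by
            have h1 : s + 1 ≤ Real.exp s := by
              have := Real.add_one_le_exp s; linarith
            calc Real.exp (-a * s ^ 2 + K * s + c0) * (s + 1)
                ≤ Real.exp (-a * s ^ 2 + K * s + c0) * Real.exp s := by
                  apply mul_le_mul_of_nonneg_left h1 (Real.exp_pos _).le
              _ = Real.exp (-a * s ^ 2 + (K + 1) * s + c0) := by
                  rw [← Real.exp_add]; ring_nf
              _ ≤ Real.exp ((K + 1) ^ 2 / (4 * a) + c0) := by
                  apply Real.exp_le_exp.2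
                  have := gauss_sup (K + 1) ha hs
                  linarith
          calc ‖f y‖ * Real.exp (-a * s ^ 2 + K * s + c0) * (a * (2 * s * W + W ^ 2 * (2 * R)))
              ≤ ‖f y‖ * Real.exp (-a * s ^ 2 + K * s + c0)
                  * ((2 * a * W + 2 * a * W ^ 2 * R) * (s + 1)) := by
                apply mul_le_mul_of_nonneg_left step1 (by positivity)
            _ = (2 * a * W + 2 * a * W ^ 2 * R)
                  * (Real.exp (-a * s ^ 2 + K * s + c0) * (s + 1)) * ‖f y‖ := by ring
            _ ≤ (2 * a * W + 2 * a * W ^ 2 * R)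
                  * Real.exp ((K + 1) ^ 2 / (4 * a) + c0) * ‖f y‖ := by
                apply mul_le_mul_of_nonneg_right _ (norm_nonneg _)
                apply mul_le_mul_of_nonneg_left step2 (by positivity)
  -- the pointwise derivative
  have hderiv : ∀ y : V, ∀ z : ℂ, HasDerivAt (fun z ↦ Q z y) (Q' z y) z := by
    intro y z
    have hP : HasDerivAt (fun z : ℂ ↦ -(a : ℂ) * (((‖x0 - y‖ ^ 2 : ℝ) : ℂ)
        + ((2 * ⟪x0 - y, w⟫ : ℝ) : ℂ) * z + ((‖w‖ ^ 2 : ℝ) : ℂ) * z ^ 2))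
        (-(a : ℂ) * (((2 * ⟪x0 - y, w⟫ : ℝ) : ℂ) + ((‖w‖ ^ 2 : ℝ) : ℂ) * (2 * z))) z :=
      (hasDerivAt_quad ((‖x0 - y‖ ^ 2 : ℝ) : ℂ) ((2 * ⟪x0 - y, w⟫ : ℝ) : ℂ)
        ((‖w‖ ^ 2 : ℝ) : ℂ) z).const_mul (-(a : ℂ))
    have hexp := hP.cexp
    have := hexp.const_mul (f y)
    rw [hQ', hQ]
    refine this.congr_deriv ?_
    beta_reduce
    rw [hWdef]
    ring
  -- apply the dominated-derivative theorem
  have key := hasDerivAt_integral_of_dominated_loc_of_deriv_le (F := Q) (F' := Q')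
    (μ := (volume : Measure V)) (bound := fun y ↦ CC * ‖f y‖) (x₀ := z0) (Metric.ball_mem_nhds z0 zero_lt_one)
    (Filter.Eventually.of_forall measQ)
    (hQint z0 (by rw [hRdef]; linarith))
    (measQ' z0)
    (Filter.Eventually.of_forall fun y ↦ hQ'le y)
    ((hf.norm.const_mul CC))
    (Filter.Eventually.of_forall fun y ↦ fun z _ ↦ hderiv y z)
  exact key.2.differentiableAt
end Aux4

section Aux56

variable {V : Type*} [NormedAddCommGroup V] [InnerProductSpace ℝ V] [FiniteDimensional ℝ V]
  [MeasurableSpace V] [BorelSpace V]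

private lemma conv_gaussian_eq_zero (f : V → ℂ) (hf : Integrable f) (a : ℝ) (ha : 0 < a)
    (U : Set V) (hU : IsOpen U) (x0 : V) (hx0 : x0 ∈ U)
    (hvan : ∀ x ∈ U, (∫ y, f y * Complex.exp (-(a : ℂ) * ((‖x - y‖ ^ 2 : ℝ) : ℂ))) = 0) :
    ∀ x, (∫ y, f y * Complex.exp (-(a : ℂ) * ((‖x - y‖ ^ 2 : ℝ) : ℂ))) = 0 := by
  intro x
  obtain ⟨w, hw⟩ : ∃ w : V, w = x - x0 := ⟨_, rfl⟩
  obtain ⟨G, hG⟩ : ∃ G : ℂ → ℂ, G = fun z ↦ ∫ y, f y * Complex.exp (-(a : ℂ) *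
      (((‖x0 - y‖ ^ 2 : ℝ) : ℂ) + ((2 * ⟪x0 - y, w⟫ : ℝ) : ℂ) * z
        + ((‖w‖ ^ 2 : ℝ) : ℂ) * z ^ 2)) := ⟨_, rfl⟩
  have hGanalytic : AnalyticOnNhd ℂ G Set.univ := by
    rw [hG]
    exact (entire_conv f hf a ha x0 w).differentiableOn.analyticOnNhd isOpen_univ
  have hGreal : ∀ s : ℝ, G (s : ℂ)
      = ∫ y, f y * Complex.exp (-(a : ℂ) * ((‖x0 + s • w - y‖ ^ 2 : ℝ) : ℂ)) := by
    intro s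
    have hint : (fun y : V ↦ f y * Complex.exp (-(a : ℂ) *
        (((‖x0 - y‖ ^ 2 : ℝ) : ℂ) + ((2 * ⟪x0 - y, w⟫ : ℝ) : ℂ) * (s : ℂ)
          + ((‖w‖ ^ 2 : ℝ) : ℂ) * (s : ℂ) ^ 2)))
        = fun y : V ↦ f y * Complex.exp (-(a : ℂ) * ((‖x0 + s • w - y‖ ^ 2 : ℝ) : ℂ)) := by
      funext y
      have hnorm : ‖x0 + s • w - y‖ ^ 2
          = ‖x0 - y‖ ^ 2 + 2 * ⟪x0 - y, w⟫ * s + ‖w‖ ^ 2 * s ^ 2 := by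
        rw [show x0 + s • w - y = (x0 - y) + s • w from by rw [add_sub_right_comm]]
        rw [norm_add_sq_real, real_inner_smul_right, norm_smul]
        simp only [Real.norm_eq_abs, mul_pow, sq_abs]
        ring
      congr 2
      rw [hnorm]
      push_cast
      ring
    simp only [hG]
    rw [hint]
  have hcont : ContinuousAt (fun s : ℝ ↦ x0 + s • w) 0 := by fun_prop
  have hmem : ∀ᶠ s : ℝ in nhds 0, x0 + s • w ∈ U := by
    apply hcont.eventually_mem
    rw [show x0 + (0 : ℝ) • w = x0 from by simp]
    exact hU.mem_nhds hx0
  obtain ⟨ε, hε, hball⟩ := Metric.eventually_nhds_iff.1 hmem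
  have hfreq : ∃ᶠ z : ℂ in nhdsWithin 0 {(0 : ℂ)}ᶜ, G z = 0 := by
    have htend : Filter.Tendsto (fun n : ℕ ↦ ((ε / 2 * (1 / ((n : ℝ) + 1)) : ℝ) : ℂ))
        Filter.atTop (nhdsWithin 0 {(0 : ℂ)}ᶜ) := by
      apply tendsto_nhdsWithin_of_tendsto_nhds_of_eventually_within
      · have h1 : Filter.Tendsto (fun n : ℕ ↦ (ε / 2 * (1 / ((n : ℝ) + 1)) : ℝ))
            Filter.atTop (nhds 0) := by
          have h2 := tendsto_one_div_add_atTop_nhds_zero_nat.const_mul (ε / 2)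
          rw [mul_zero] at h2
          exact h2
        have h3 := (Complex.continuous_ofReal.tendsto 0).comp h1
        rw [Complex.ofReal_zero] at h3
        exact h3
      · apply Filter.Eventually.of_forall
        intro n
        simp only [Set.mem_compl_iff, Set.mem_singleton_iff, Complex.ofReal_eq_zero]
        positivity
    apply htend.frequently
    apply Filter.Frequently.of_forall
    intro n
    have hpos : 0 < ε / 2 * (1 / ((n : ℝ) + 1)) := by positivity
    have hlt : ε / 2 * (1 / ((n : ℝ) + 1)) < ε := by
      have h1 : (1 : ℝ) / ((n : ℝ) + 1) ≤ 1 := by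
        rw [div_le_one (by positivity)]
        simp
      nlinarith
    have hUmem : x0 + (ε / 2 * (1 / ((n : ℝ) + 1))) • w ∈ U := by
      apply hball
      rw [Real.dist_eq, sub_zero, abs_of_pos hpos]
      exact hlt
    rw [hGreal]
    exact hvan _ hUmem
  have heq : Set.EqOn G 0 Set.univ :=
    hGanalytic.eqOn_zero_of_preconnected_of_frequently_eq_zero isPreconnected_univ
      (Set.mem_univ 0) hfreq
  have h1 : G 1 = 0 := heq (Set.mem_univ 1)
  have h2 := hGreal 1
  rw [show ((1 : ℝ) : ℂ) = 1 from by norm_num, h1,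
    show x0 + (1 : ℝ) • w = x from by rw [one_smul, hw]; abel] at h2
  exact h2.symm

private lemma fourier_eq_zero_of_conv (f : V → ℂ) (hf : Integrable f) (a : ℝ) (ha : 0 < a)
    (hzero : ∀ x, (∫ y, f y * Complex.exp (-(a : ℂ) * ((‖x - y‖ ^ 2 : ℝ) : ℂ))) = 0) :
    ∀ ξ, 𝓕 f ξ = 0 := by
  intro ξ
  set q : V → ℂ := fun v ↦ Complex.exp (-(a : ℂ) * ((‖v‖ ^ 2 : ℝ) : ℂ)) with hqdef
  have hq_eq : q = fun v ↦ Complex.exp (-(a : ℂ) * (‖v‖ : ℂ) ^ 2) := by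
    funext v; rw [hqdef]; push_cast; ring_nf
  have hqint : Integrable q volume := by
    rw [hq_eq]
    have := GaussianFourier.integrable_cexp_neg_mul_sq_norm_add
      (b := (a : ℂ)) (by simpa using ha) 0 (0 : V)
    simpa using this
  have hqcont : Continuous q := by
    rw [hqdef]
    apply Complex.continuous_exp.comp
    exact continuous_const.mul
      (Complex.continuous_ofReal.comp (continuous_norm.pow 2))
  set e : V → ℂ := fun v ↦ Complex.exp (((-2 * Real.pi * ⟪v, ξ⟫ : ℝ) : ℂ) * Complex.I)
    with hedef
  have henorm : ∀ v, ‖e v‖ = 1 := fun v ↦ Complex.norm_exp_ofReal_mul_I _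
  have he_cont : Continuous e := by
    rw [hedef]
    apply Complex.continuous_exp.comp
    apply Continuous.mul _ continuous_const
    exact Complex.continuous_ofReal.comp
      (continuous_const.mul (continuous_id.inner continuous_const))
  have he_add : ∀ x y : V, e (x + y) = e x * e y := by
    intro x y
    rw [hedef]
    simp only
    rw [← Complex.exp_add]
    congr 1
    rw [inner_add_left]
    push_cast
    ring
  have hC : (∫ v, e v * q v) = 𝓕 q ξ := by
    rw [Real.fourier_eq']
    simp only [hedef, smul_eq_mul]
  have hCne : (∫ v, e v * q v) ≠ 0 := by
    rw [hC, hq_eq, fourier_gaussian_innerProductSpace (by simpa using ha) ξ]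
    apply mul_ne_zero
    · intro h
      rcases (Complex.cpow_eq_zero_iff _ _).1 h with ⟨h1, -⟩
      have : ((Real.pi : ℂ) / (a : ℂ)) ≠ 0 := by
        apply div_ne_zero
        · simpa using Real.pi_ne_zero
        · simpa using ha.ne'
      exact this h1
    · exact Complex.exp_ne_zero _
  have hprod : Integrable (fun p : V × V ↦ e p.1 * (f p.2 * q (p.1 - p.2)))
      (volume.prod volume) := by
    have hbase := hf.convolution_integrand (ContinuousLinearMap.mul ℝ ℂ) hqint
    exact hbase.bdd_mul ((he_cont.comp continuous_fst).aestronglyMeasurable)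
      (Filter.Eventually.of_forall fun p ↦ le_of_eq (henorm p.1))
  have swap := MeasureTheory.integral_integral_swap
    (f := fun x y ↦ e x * (f y * q (x - y))) hprod
  have lhs0 : (∫ x, ∫ y, e x * (f y * q (x - y))) = 0 := by
    have h1 : ∀ x : V, (∫ y, e x * (f y * q (x - y))) = e x * ∫ y, f y * q (x - y) :=
      fun x ↦ integral_const_mul _ _
    simp only [h1]
    simp only [hqdef, hzero, mul_zero, integral_zero]
  rw [swap] at lhs0
  have rhs : ∀ y : V, (∫ x, e x * (f y * q (x - y)))
      = f y * e y * (∫ v, e v * q v) := by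
    intro y
    have h1 : (∫ x, e x * (f y * q (x - y))) = f y * ∫ x, e x * q (x - y) := by
      rw [show (fun x ↦ e x * (f y * q (x - y))) = fun x ↦ f y * (e x * q (x - y)) from by
        funext x; ring]
      exact integral_const_mul _ _
    rw [h1]
    have h2 : (∫ x, e x * q (x - y)) = ∫ x, e (x + y) * q (x + y - y) :=
      (MeasureTheory.integral_add_right_eq_self (fun x ↦ e x * q (x - y)) y).symm
    have h3 : (fun x ↦ e (x + y) * q (x + y - y)) = fun x ↦ e y * (e x * q x) := by
      funext x
      rw [add_sub_cancel_right, he_add]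
      ring
    rw [h2, h3, integral_const_mul]
    ring
  have lhs1 : (∫ y, f y * e y) * (∫ v, e v * q v) = 0 := by
    rw [← lhs0, ← integral_mul_const]
    congr 1
    funext y
    rw [rhs y]
  have hfe : (∫ y, f y * e y) = 0 := by
    rcases mul_eq_zero.1 lhs1 with h | h
    · exact h
    · exact absurd h hCne
  rw [Real.fourier_eq']
  rw [show (∫ v, Complex.exp (((-2 : ℝ) * Real.pi * ⟪v, ξ⟫ : ℝ) * Complex.I) • f v)
      = ∫ y, f y * e y from by
    congr 1; funext v; rw [smul_eq_mul, hedef, mul_comm]]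
  exact hfe

end Aux56

/-- If the convolution of an integrable `f` on `ℝ^d` with the Gaussian heat kernel
`p_t` vanishes on a nonempty open set, then `f = 0` a.e. -/
theorem stmt14 (d : ℕ) (f : EuclideanSpace ℝ (Fin d) → ℂ) (hf : Integrable f)
    (t : ℝ) (ht : 0 < t)
    (p : EuclideanSpace ℝ (Fin d) → ℂ)
    (hp : ∀ x, p x = ((4 * Real.pi * t) ^ (-(d : ℝ) / 2) * Real.exp (-‖x‖ ^ 2 / (4 * t)) : ℝ))
    (U : Set (EuclideanSpace ℝ (Fin d))) (hU : IsOpen U) (hUne : U.Nonempty)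
    (hvanish : ∀ x ∈ U, (∫ y, f y * p (x - y)) = 0) :
    f =ᵐ[volume] 0 := by
  have ht4 : (0 : ℝ) < 4 * t := by linarith
  have ha : (0 : ℝ) < (4 * t)⁻¹ := by positivity
  have hcpos : (0 : ℝ) < (4 * Real.pi * t) ^ (-(d : ℝ) / 2) :=
    Real.rpow_pos_of_pos (by positivity) _
  have hvan' : ∀ x ∈ U,
      (∫ y, f y * Complex.exp (-(((4 * t)⁻¹ : ℝ) : ℂ) * ((‖x - y‖ ^ 2 : ℝ) : ℂ))) = 0 := by
    intro x hx
    have h0 := hvanish x hx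
    have hrw : ∀ y : EuclideanSpace ℝ (Fin d), f y * p (x - y)
        = (((4 * Real.pi * t) ^ (-(d : ℝ) / 2) : ℝ) : ℂ)
          * (f y * Complex.exp (-(((4 * t)⁻¹ : ℝ) : ℂ) * ((‖x - y‖ ^ 2 : ℝ) : ℂ))) := by
      intro y
      rw [hp (x - y)]
      push_cast
      rw [show (-(‖x - y‖ : ℂ) ^ 2 / (4 * (t : ℂ)) : ℂ)
          = -((4 * (t : ℂ))⁻¹) * (‖x - y‖ : ℂ) ^ 2 from by ring]
      ring
    have h1 : (∫ y, f y * p (x - y))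
        = (((4 * Real.pi * t) ^ (-(d : ℝ) / 2) : ℝ) : ℂ)
          * ∫ y, f y * Complex.exp (-(((4 * t)⁻¹ : ℝ) : ℂ) * ((‖x - y‖ ^ 2 : ℝ) : ℂ)) := by
      rw [show (fun y ↦ f y * p (x - y)) = fun y ↦ (((4 * Real.pi * t) ^ (-(d : ℝ) / 2) : ℝ) : ℂ)
          * (f y * Complex.exp (-(((4 * t)⁻¹ : ℝ) : ℂ) * ((‖x - y‖ ^ 2 : ℝ) : ℂ))) from
        funext hrw]
      exact integral_const_mul _ _
    rw [h1] at h0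
    rcases mul_eq_zero.1 h0 with h | h
    · exact absurd h (by simpa using hcpos.ne')
    · exact h
  obtain ⟨x0, hx0⟩ := hUne
  have hzero := conv_gaussian_eq_zero f hf ((4 * t)⁻¹) ha U hU x0 hx0 hvan'
  have hFzero := fourier_eq_zero_of_conv f hf ((4 * t)⁻¹) ha hzero
  exact ae_zero_of_fourier_zero f hf hFzero
end
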